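/- Let R be a right hereditary ring, N a right R-module, and let C be the class of finitely presented R-modules M such that Hom_R(M,N) = 0 and Ext^1_R(M,N) = 0. Then C is closed under images: if f : A → B is a map with A, B ∈ C, then im(f) ∈ C. -/

import Mathlib

/-!
Present `B` as `(Fin n → R) ⧸ K` with `K` finitely generated and let `J` be the preimage of
`im f`, so that `im f ≅ J ⧸ K`. Over a hereditary ring every submodule of `Fin n → R` is
projective, so `J` is finitely generated projective and `im f` is finitely presented.
Projectivity of `J` also reduces `Ext¹(im f, N) = 0` to extending maps `K → N` over `J`; they
extend even over `Fin n → R` because `Ext¹(B, N) = 0` (push out `0 → K → Rⁿ → B → 0` along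
the map). Finally `Hom(im f, N) = 0` since `im f` is a quotient of `A`.
-/

/-- `Ext¹_R(M, N) = 0`, expressed concretely: every short exact sequence
`0 → N → X → M → 0` splits. -/
def Ext1Vanishes (R : Type) [Ring R] (M N : Type) [AddCommGroup M] [Module R M]
    [AddCommGroup N] [Module R N] : Prop :=
  ∀ (X : Type) [AddCommGroup X] [Module R X] (i : N →ₗ[R] X) (p : X →ₗ[R] M),
    Function.Injective i → Function.Surjective p →
    LinearMap.range i = LinearMap.ker p →
    ∃ s : M →ₗ[R] X, p ∘ₗ s = LinearMap.id

/-- A ring is right hereditary if every ideal is projective as a module. -/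
def IsRightHereditary (R : Type) [Ring R] : Prop :=
  ∀ I : Ideal R, Module.Projective R I

open Function

variable {R : Type} [Ring R]

def SubmodulesProjective (R M : Type*) [Ring R] [AddCommGroup M] [Module R M] : Prop :=
  ∀ S : Submodule R M, Module.Projective R S

theorem Module.Projective.of_exact {A B C : Type*} [AddCommGroup A] [Module R A]
    [AddCommGroup B] [Module R B] [AddCommGroup C] [Module R C]
    [Module.Projective R A] [Module.Projective R C] {f : A →ₗ[R] B} {g : B →ₗ[R] C}
    (h : Exact f g) (hf : Function.Injective f) (hg : Surjective g) : Module.Projective R B :=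
  have ⟨l, hl⟩ := Module.projective_lifting_property g .id hg
  .of_equiv (h.splitSurjectiveEquiv hf ⟨l, hl⟩).1.symm

namespace SubmodulesProjective

variable {A B C : Type*} [AddCommGroup A] [Module R A] [AddCommGroup B] [Module R B]
  [AddCommGroup C] [Module R C]

theorem of_linearEquiv (h : SubmodulesProjective R A) (e : A ≃ₗ[R] B) :
    SubmodulesProjective R B := fun S =>
  have := h (S.map (e.symm : B →ₗ[R] A))
  .of_equiv (e.symm.submoduleMap S).symm

theorem of_exact (hA : SubmodulesProjective R A) (hC : SubmodulesProjective R C)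
    {f : A →ₗ[R] B} {g : B →ₗ[R] C} (h : Exact f g) (hf : Injective f) :
    SubmodulesProjective R B := by
  intro M
  have := hA (M.comap f)
  have := hC (M.map g)
  let f' : M.comap f →ₗ[R] M := f.restrict fun _ hx => hx
  refine Module.Projective.of_exact (f := f') (g := g.submoduleMap M) ?_ ?_
    (g.submoduleMap_surjective M)
  · intro m
    rw [Subtype.ext_iff, LinearMap.submoduleMap_coe_apply, Submodule.coe_zero, h]
    constructor
    · rintro ⟨a, ha⟩
      exact ⟨⟨a, show f a ∈ M from ha ▸ m.2⟩, Subtype.ext ha⟩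
    · rintro ⟨a, rfl⟩
      exact ⟨a, rfl⟩
  · intro a b hab
    exact Subtype.ext (hf (congrArg Subtype.val hab))

theorem pi_fin (hR : IsRightHereditary R) : ∀ n, SubmodulesProjective R (Fin n → R)
  | 0 => fun S =>
    have : Subsingleton S := ⟨fun _ _ => Subtype.ext (funext finZeroElim)⟩
    .of_basis (Module.Basis.empty (ι := Empty) S)
  | n + 1 => (of_exact hR (pi_fin hR n) Exact.inl_snd LinearMap.inl_injective).of_linearEquiv
      (Fin.consLinearEquiv R fun _ => R)

end SubmodulesProjective

theorem Module.finitePresentation_of_exact_of_projective {K P M : Type*}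
    [AddCommGroup K] [Module R K] [AddCommGroup P] [Module R P] [AddCommGroup M] [Module R M]
    [Module.Finite R K] [Module.Projective R P] [Module.Finite R M]
    {j : K →ₗ[R] P} {g : P →ₗ[R] M} (h : Exact j g) (hg : Surjective g) :
    Module.FinitePresentation R M :=
  have : Module.Finite R P := .of_exact h hg
  have := Module.finitePresentation_of_projective R P
  Module.finitePresentation_of_surjective g hg (h.linearMap_ker_eq ▸ Submodule.fg_range j)

section Pushout

variable {Q F N M : Type*} [AddCommGroup Q] [Module R Q] [AddCommGroup F] [Module R F]
  [AddCommGroup N] [Module R N] [AddCommGroup M] [Module R M]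
  (j : Q →ₗ[R] F) (u : Q →ₗ[R] N)

abbrev Pushout : Type _ :=
  (N × F) ⧸ LinearMap.range (LinearMap.inl R N F ∘ₗ u - LinearMap.inr R N F ∘ₗ j)

namespace Pushout

def inl : N →ₗ[R] Pushout j u := Submodule.mkQ _ ∘ₗ LinearMap.inl R N F

def inr : F →ₗ[R] Pushout j u := Submodule.mkQ _ ∘ₗ LinearMap.inr R N F

theorem inr_comp : inr j u ∘ₗ j = inl j u ∘ₗ u := by
  ext q
  refine ((Submodule.Quotient.eq _).2 (LinearMap.mem_range.2 ⟨q, ?_⟩)).symm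
  simp

variable {j u}

def desc {π : F →ₗ[R] M} (hπ : π ∘ₗ j = 0) : Pushout j u →ₗ[R] M :=
  Submodule.liftQ _ (π ∘ₗ LinearMap.snd R N F) <| LinearMap.range_le_ker_iff.2 <| by
    ext q; simpa using congr($hπ q)

theorem inl_injective (hj : Injective j) : Injective (inl j u) := by
  rw [← LinearMap.ker_eq_bot, eq_bot_iff]
  intro a ha
  obtain ⟨q, hq⟩ := (Submodule.Quotient.mk_eq_zero _).1 ha
  have hq0 : q = 0 := hj (by simpa using congr(($hq).2))
  simpa [hq0] using congr(($hq).1).symm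

theorem desc_surjective {π : F →ₗ[R] M} (hπ : Surjective π) (hπj : π ∘ₗ j = 0) :
    Surjective (desc (u := u) hπj) := fun m =>
  have ⟨x, hx⟩ := hπ m
  ⟨inr j u x, hx⟩

theorem exact_inl_desc {π : F →ₗ[R] M} (h : Exact j π) :
    Exact (inl j u) (desc (u := u) h.linearMap_comp_eq_zero) := by
  intro y
  obtain ⟨⟨a, x⟩, rfl⟩ := Submodule.mkQ_surjective _ y
  change π x = 0 ↔ _
  rw [h]
  constructor
  · rintro ⟨q, rfl⟩
    refine ⟨a + u q, (Submodule.Quotient.eq _).2 ⟨q, ?_⟩⟩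
    simp
  · rintro ⟨b, hb⟩
    obtain ⟨q, hq⟩ := (Submodule.Quotient.eq _).1 hb
    exact ⟨q, by simpa using congr(($hq).2)⟩

end Pushout

end Pushout

namespace Ext1Vanishes

variable {M N : Type} [AddCommGroup M] [Module R M] [AddCommGroup N] [Module R N]

theorem exists_retraction (h : Ext1Vanishes R M N) {X : Type} [AddCommGroup X] [Module R X]
    {i : N →ₗ[R] X} {p : X →ₗ[R] M} (hip : Exact i p) (hi : Injective i)
    (hp : Surjective p) : ∃ r : X →ₗ[R] N, r ∘ₗ i = .id :=
  have ⟨s, hs⟩ := h X i p hi hp hip.linearMap_ker_eq.symm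
  (((hip.split_tfae').out 0 1 rfl rfl).1 ⟨hi, s, hs⟩).2

theorem exists_comp_eq (h : Ext1Vanishes R M N) {Q F : Type} [AddCommGroup Q] [Module R Q]
    [AddCommGroup F] [Module R F] {j : Q →ₗ[R] F} {π : F →ₗ[R] M} (hjπ : Exact j π)
    (hj : Injective j) (hπ : Surjective π) (u : Q →ₗ[R] N) :
    ∃ v : F →ₗ[R] N, v ∘ₗ j = u := by
  obtain ⟨r, hr⟩ := h.exists_retraction (Pushout.exact_inl_desc hjπ) (Pushout.inl_injective hj)
    (Pushout.desc_surjective hπ _)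
  refine ⟨r ∘ₗ Pushout.inr j u, ?_⟩
  rw [LinearMap.comp_assoc, Pushout.inr_comp, ← LinearMap.comp_assoc, hr, LinearMap.id_comp]

theorem of_exact {Q P : Type*} [AddCommGroup Q] [Module R Q] [AddCommGroup P] [Module R P]
    [Module.Projective R P] {j : Q →ₗ[R] P} {g : P →ₗ[R] M} (hjg : Exact j g)
    (hg : Surjective g) (hext : ∀ u : Q →ₗ[R] N, ∃ v : P →ₗ[R] N, v ∘ₗ j = u) :
    Ext1Vanishes R M N := by
  intro X _ _ i p hi hp hip
  obtain ⟨t, ht⟩ := Module.projective_lifting_property p g hp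
  have htj (q : Q) : t (j q) ∈ LinearMap.range i := by
    rw [hip, LinearMap.mem_ker, ← LinearMap.comp_apply, ht, hjg.apply_apply_eq_zero]
  obtain ⟨v, hv⟩ :=
    hext ((LinearEquiv.ofInjective i hi).symm ∘ₗ (t ∘ₗ j).codRestrict _ htj)
  have hiv (q : Q) : i (v (j q)) = t (j q) := by
    simpa using congr(i ($hv q))
  have hpi (z : N) : p (i z) = 0 := by
    rw [← LinearMap.mem_ker, ← hip]
    exact LinearMap.mem_range_self i z
  -- correcting the lift `t` by `i ∘ v` makes it vanish on `range j = ker g`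
  set t' := t - i ∘ₗ v
  have ht'j : LinearMap.range j ≤ LinearMap.ker t' := by
    rintro _ ⟨q, rfl⟩
    simp [t', hiv]
  refine ⟨(LinearMap.range j).liftQ t' ht'j ∘ₗ (hjg.linearEquivOfSurjective hg).symm, ?_⟩
  ext x
  obtain ⟨y, rfl⟩ := hg x
  rw [LinearMap.comp_apply, LinearMap.comp_apply, LinearEquiv.coe_coe,
    hjg.linearEquivOfSurjective_symm_apply, Submodule.liftQ_apply]
  simp [t', hpi, ← ht]

end Ext1Vanishes

section Preimage

variable {F M : Type*} [AddCommGroup F] [Module R F] [AddCommGroup M] [Module R M]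
  (π : F →ₗ[R] M) (I : Submodule R M)

theorem exact_inclusion_ker_restrict_comap :
    Exact (Submodule.inclusion (π.ker_le_comap (p := I)))
      (π.restrict (p := I.comap π) (q := I) fun _ hx => hx) := by
  intro x
  rw [Subtype.ext_iff, LinearMap.coe_restrict_apply, Submodule.coe_zero]
  exact ⟨fun hx => ⟨⟨x, hx⟩, rfl⟩, by rintro ⟨k, rfl⟩; exact k.2⟩

variable {π} in
theorem restrict_comap_surjective (hπ : Surjective π) :
    Surjective (π.restrict (p := I.comap π) (q := I) fun _ hx => hx) := by
  rintro ⟨m, hm⟩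
  obtain ⟨x, rfl⟩ := hπ m
  exact ⟨⟨x, hm⟩, rfl⟩

end Preimage

theorem stmt1 {R : Type} [Ring R] (hR : IsRightHereditary R)
    {N : Type} [AddCommGroup N] [Module R N]
    {A B : Type} [AddCommGroup A] [Module R A] [AddCommGroup B] [Module R B]
    (hA : Module.FinitePresentation R A) (hB : Module.FinitePresentation R B)
    (hAhom : ∀ g : A →ₗ[R] N, g = 0)
    (hBext : Ext1Vanishes R B N)
    (f : A →ₗ[R] B) :
    Module.FinitePresentation R ↥(LinearMap.range f) ∧
    (∀ g : ↥(LinearMap.range f) →ₗ[R] N, g = 0) ∧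
    Ext1Vanishes R ↥(LinearMap.range f) N := by
  obtain ⟨n, π, hπ⟩ := Module.Finite.exists_fin' R B
  have hexact := exact_inclusion_ker_restrict_comap π (LinearMap.range f)
  have hsurj := restrict_comap_surjective (LinearMap.range f) hπ
  have := SubmodulesProjective.pi_fin hR n ((LinearMap.range f).comap π)
  have : Module.Finite R (LinearMap.ker π) := .of_fg (hB.fg_ker π hπ)
  refine ⟨Module.finitePresentation_of_exact_of_projective hexact hsurj, fun g => ?_,
    Ext1Vanishes.of_exact hexact hsurj fun u => ?_⟩
  · ext ⟨_, a, rfl⟩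
    exact congr($(hAhom (g ∘ₗ f.rangeRestrict)) a)
  · obtain ⟨v, hv⟩ := hBext.exists_comp_eq (LinearMap.exact_subtype_ker_map π)
      (Submodule.injective_subtype _) hπ u
    refine ⟨v ∘ₗ Submodule.subtype _, ?_⟩
    rw [LinearMap.comp_assoc, Submodule.subtype_comp_inclusion, hv]
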